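/- For m = 2, the words z_n coincide with the singular words of the Fibonacci word: for all n ≥ 0, z_n^(2) = w_{n-1}. -/

import Mathlib

/-- The `m`-bonacci morphism on letters: `i ↦ 0(i+1)` for `i ≤ m-2`, `(m-1) ↦ 0`. -/
def phi (m a : ℕ) : List ℕ := if a = m - 1 then [0] else [0, a + 1]

/-- The `m`-bonacci morphism on words. -/
def phiW (m : ℕ) (w : List ℕ) : List ℕ := w.flatMap (phi m)

/-- The finite `m`-bonacci words `h_n = φ_m^n(0)`; for `m = 2` these are the
Fibonacci words `f_n` (`f₀ = 0`, `f₁ = 01`, `f_n = f_{n-1} f_{n-2}`). -/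
def hb (m : ℕ) : ℕ → List ℕ
  | 0 => [0]
  | n+1 => phiW m (hb m n)

/-- The penultimate letter of a word (default 0). -/
def penult (l : List ℕ) : ℕ := l.dropLast.getLastD 0

/-- Singular words of the Fibonacci word, shifted: `sw n` is the paper's `w_{n-2}`
(so `sw 1 = w₋₁ = 0`, `sw 2 = w₀ = 1`, `sw 3 = w₁ = 00`, and for the paper's `n ≥ 2`,
`w_n = sw (n+2) = a · f_n · b⁻¹` with `ab` the length-2 suffix of `f_n = hb 2 n`). -/
def sw : ℕ → List ℕ
  | 0 => []
  | 1 => [0]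
  | 2 => [1]
  | 3 => [0, 0]
  | n+4 => penult (hb 2 (n + 2)) :: (hb 2 (n + 2)).dropLast

/-- The words `z_n` of the closed `z`-factorization of the `m`-bonacci word:
`z₀ = 0`, `z₁ = 1`, `z₂ = 020` (`00` when `m = 2`),
`z_n = (n-3 mod m)⁻¹ h_{n-3}^R h_{n-2}^R (n) h₀^R ⋯ h_{n-3}^R (n-2)` for `3 ≤ n ≤ m-1`, and
`z_n = (n-3 mod m)⁻¹ h_{n-3}^R h_{n-2}^R h_{n-m}^R h_{n-m+1}^R ⋯ h_{n-3}^R (n-2 mod m)` for `n ≥ m`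
(removing the first letter of `h_{n-3}^R`, which is `n-3 mod m` when `m ∤ n-3` and `0` otherwise). -/
def zb (m : ℕ) : ℕ → List ℕ
  | 0 => [0]
  | 1 => [1]
  | 2 => if m = 2 then [0, 0] else [0, 2, 0]
  | n+3 =>
    if m ≤ n + 3 then
      ((hb m n).reverse).tail ++ (hb m (n + 1)).reverse ++
        (((List.range (m - 2)).map (fun j => (hb m (n + 3 - m + j)).reverse)).flatten) ++
        [(n + 1) % m]
    else
      ((hb m n).reverse).tail ++ (hb m (n + 1)).reverse ++ [n + 3] ++
        (((List.range (n + 1)).map (fun j => (hb m j).reverse)).flatten) ++ [n + 1]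

/-- `pal n` is `hb 2 n` with its last two letters removed. -/
def pal (n : ℕ) : List ℕ := ((hb 2 n).dropLast).dropLast

lemma phiW_append (m : ℕ) (a b : List ℕ) : phiW m (a ++ b) = phiW m a ++ phiW m b := by
  simp [phiW]

lemma hb_rec : ∀ n : ℕ, hb 2 (n + 2) = hb 2 (n + 1) ++ hb 2 n := by
  intro n
  induction n with
  | zero => rfl
  | succ k ih =>
    show phiW 2 (hb 2 (k + 2)) = _
    conv_lhs => rw [ih]
    rw [phiW_append]
    rfl

lemma hb_len (n : ℕ) : 2 ≤ (hb 2 (n + 1)).length := by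
  induction n with
  | zero => decide
  | succ k ih =>
    rw [hb_rec]
    simp only [List.length_append]
    omega

lemma pal_rec (n : ℕ) : pal (n + 3) = hb 2 (n + 2) ++ pal (n + 1) := by
  have h1 : hb 2 (n + 1) ≠ [] := by
    intro h; have := hb_len n; rw [h] at this; simp at this
  have h2 : (hb 2 (n + 1)).dropLast ≠ [] := by
    intro h
    have := hb_len n
    have : (hb 2 (n + 1)).dropLast.length = (hb 2 (n+1)).length - 1 := List.length_dropLast
    rw [h] at this
    simp at this
    omega
  show ((hb 2 (n + 3)).dropLast).dropLast = _
  rw [show n + 3 = (n + 1) + 2 from rfl, hb_rec,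
    List.dropLast_append_of_ne_nil h1, List.dropLast_append_of_ne_nil h2]
  rfl

lemma hb_last (n : ℕ) : hb 2 (n + 1) = pal (n + 1) ++ [n % 2, (n + 1) % 2] := by
  induction n using Nat.twoStepInduction with
  | zero => decide
  | one => decide
  | more k ih _ =>
    have e1 : (k + 2) % 2 = k % 2 := by omega
    have e2 : (k + 2 + 1) % 2 = (k + 1) % 2 := by omega
    rw [show k + 2 + 1 = k + 3 from rfl, hb_rec, pal_rec, ih, e1, e2, List.append_assoc]

lemma hb_swap : ∀ n : ℕ, hb 2 (n + 2) ++ pal (n + 1) = hb 2 (n + 1) ++ pal (n + 2) := by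
  intro n
  induction n with
  | zero => decide
  | succ k ih =>
    rw [show k + 1 + 2 = k + 3 from rfl, hb_rec (k+1), pal_rec, List.append_assoc]
    congr 1
    exact ih.symm

lemma pal_palindrome (n : ℕ) : (pal (n + 1)).reverse = pal (n + 1) := by
  induction n using Nat.twoStepInduction with
  | zero => decide
  | one => decide
  | more k ih1 ih2 =>
    have e : (k + 1 + 1) % 2 = k % 2 := by omega
    have hrev : (hb 2 (k + 2)).reverse = [k % 2, (k + 1) % 2] ++ pal (k + 2) := by
      rw [show k + 2 = k + 1 + 1 from rfl, hb_last (k + 1), List.reverse_append, ih2, e]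
      simp
    rw [show k + 2 + 1 = k + 3 from rfl, pal_rec, List.reverse_append, ih1, hrev,
      hb_swap k, hb_last k, List.append_assoc]

lemma hb_reverse (n : ℕ) : (hb 2 (n + 1)).reverse = [(n + 1) % 2, n % 2] ++ pal (n + 1) := by
  conv_lhs => rw [hb_last]
  rw [List.reverse_append, pal_palindrome]
  rfl

/-- for `m = 2` the words `z_n` are exactly the singular words of the
Fibonacci word: `z_n = w_{n-1}` for all `n ≥ 0` (here `sw k` is the paper's `w_{k-2}`). -/
theorem zb_two_eq_singular : ∀ n : ℕ, zb 2 n = sw (n + 1) := by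
  intro n
  match n with
  | 0 => rfl
  | 1 => rfl
  | 2 => rfl
  | 3 => decide
  | (k + 4) =>
    show zb 2 ((k + 1) + 3) = sw ((k + 1) + 4)
    rw [zb, sw]
    simp only [show (2 : ℕ) ≤ k + 1 + 3 by omega, if_true, Nat.sub_self, List.range_zero,
      List.map_nil, List.flatten_nil, List.append_nil]
    rw [hb_reverse k, hb_reverse (k + 1)]
    have hpen : penult (hb 2 (k + 1 + 2)) = (k + 2) % 2 := by
      rw [show k + 1 + 2 = (k + 2) + 1 from rfl, penult, hb_last (k + 2),
        show pal (k+2+1) ++ [(k + 2) % 2, (k+2+1) % 2] = (pal (k+2+1) ++ [(k + 2) % 2]) ++ [(k+2+1) % 2] by simp,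
        List.dropLast_concat, List.getLastD_concat]
    have hdl : (hb 2 (k + 1 + 2)).dropLast = pal (k + 3) ++ [(k + 2) % 2] := by
      rw [show k + 1 + 2 = (k + 2) + 1 from rfl, hb_last (k + 2),
        show pal (k+2+1) ++ [(k + 2) % 2, (k+2+1) % 2] = (pal (k+2+1) ++ [(k + 2) % 2]) ++ [(k+2+1) % 2] by simp,
        List.dropLast_concat]
    rw [hpen, hdl, pal_rec k, hb_swap k, hb_last k]
    have h2 : (k + 2) % 2 = k % 2 := by omega
    have h3 : (k + 1 + 1) % 2 = k % 2 := by omega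
    simp [List.append_assoc, h2, h3]
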